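/- arXiv:1611.02486 — 6 statements merged into one kernel-verified Lean document; each statement's English description precedes it below -/
import Mathlib

section
/- Let G be a finite group with Sylow p-subgroup P, nontrivial cyclic hyperfocal subgroup P̃ = P ∩ O^p(G), and assume P̃ ⊴ P with |P̃| = p^n. Let T be a p-complement of N_G(P) and X a subgroup of T properly containing O_{p'}(C_G(P)). If X/O_{p'}(C_G(P)) acts fixed-point-freely on P̃ \ {1} and [P, X] ≤ P̃, then P = P̃ ⋊ C_P(X). -/
/-!
Fix `x ∈ X \ K`. It acts on the finite group `P̃` without nontrivial fixed points, so
`s ↦ ⁅s, x⁆` is a bijection of `P̃`, and every coset `P̃ u` with `u ∈ P` (which is `x`-invariant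
because `⁅P, X⁆ ≤ P̃`) contains a unique `x`-fixed element `w`. As `Aut P̃` is abelian, the
commutators `⁅x, y⁆`, `y ∈ X`, centralize `P̃`, hence lie in `K ≤ C_G(P)`; so `y w y⁻¹` is again
an `x`-fixed element of `P̃ u`, i.e. `y` fixes `w`. Hence `P = P̃ · C_P(X)`, and
`P̃ ∩ C_P(X) = 1` by fixed-point-freeness.
-/

open scoped commutatorElement

namespace Subgroup

variable {G : Type*} [Group G]

theorem commutator_mem_centralizer_of_isCyclic {A : Subgroup G} [IsCyclic A] {x y : G}
    (hx : x ∈ normalizer (A : Set G)) (hy : y ∈ normalizer (A : Set G)) :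
    ⁅x, y⁆ ∈ centralizer (A : Set G) := by
  have hcomm : Commute (A.normalizerMonoidHom ⟨x, hx⟩) (A.normalizerMonoidHom ⟨y, hy⟩) :=
    (IsCyclic.mulAutMulEquiv A).injective <| by simp only [map_mul, mul_comm]
  have hker : ⁅(⟨x, hx⟩ : normalizer (A : Set G)), ⟨y, hy⟩⁆ ∈ A.normalizerMonoidHom.ker := by
    rw [MonoidHom.mem_ker, map_commutatorElement, commutatorElement_eq_one_iff_commute]
    exact hcomm
  rw [normalizerMonoidHom_ker, mem_subgroupOf] at hker
  exact hker

theorem exists_mul_mem_centralizer_singleton {A : Subgroup G} [Finite A] {x u : G}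
    (hx : x ∈ normalizer (A : Set G)) (hfix : A ⊓ centralizer {x} = ⊥) (hu : ⁅u, x⁆ ∈ A) :
    ∃ s ∈ A, s * u ∈ centralizer {x} := by
  have hφ : MonoidHom.FixedPointFree (A.normalizerMonoidHom ⟨x, hx⟩) := fun a ha => by
    have : (a : G) ∈ A ⊓ centralizer {x} := by
      refine ⟨a.2, mem_centralizer_singleton_iff.mpr ?_⟩
      exact (mul_inv_eq_iff_eq_mul.mp (congrArg Subtype.val ha)).symm
    simpa [hfix] using this
  obtain ⟨g, hg⟩ := hφ.commutatorMap_surjective ⟨⁅u, x⁆, hu⟩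
  refine ⟨(g : G)⁻¹, inv_mem g.2, mem_centralizer_singleton_iff.mpr ?_⟩
  have hconj : (g : G) * x * (g : G)⁻¹ = u * x * u⁻¹ := by
    refine mul_right_cancel (b := x⁻¹) ?_
    simpa [commutatorElement_def, div_eq_mul_inv, mul_assoc] using congrArg Subtype.val hg
  calc (g : G)⁻¹ * u * x = (g : G)⁻¹ * (u * x * u⁻¹) * u := by group
    _ = (g : G)⁻¹ * ((g : G) * x * (g : G)⁻¹) * u := by rw [hconj]
    _ = x * ((g : G)⁻¹ * u) := by group

theorem le_normalizer_of_commutator_le {A P X : Subgroup G} (hAP : A ≤ P) (hPX : ⁅P, X⁆ ≤ A) :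
    X ≤ normalizer (A : Set G) :=
  le_normalizer_iff_commutator_le_left.mpr ((commutator_mono hAP le_rfl).trans hPX)

theorem inf_centralizer_inf_eq_bot {A P X : Subgroup G} {x : G} (hx : x ∈ X)
    (hfix : A ⊓ centralizer {x} = ⊥) : A ⊓ (centralizer X ⊓ P) = ⊥ :=
  le_bot_iff.mp <| hfix ▸ inf_le_inf_left A
    (inf_le_left.trans (centralizer_le (Set.singleton_subset_iff.mpr hx)))

section FixedPoints

variable {A P X : Subgroup G} {x : G} (hAP : A ≤ P) (hPX : ⁅P, X⁆ ≤ A)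
  (hfix : A ⊓ centralizer {x} = ⊥) (hxX : ∀ y ∈ X, ⁅x, y⁆ ∈ centralizer (P : Set G))
include hAP hPX hfix hxX

theorem mem_centralizer_of_mem_centralizer_singleton {w : G} (hwP : w ∈ P)
    (hw : w ∈ centralizer {x}) : w ∈ centralizer (X : Set G) := by
  intro y hy
  have hyw : ⁅y, w⁆ ∈ A := hPX ((commutator_comm X P).le (commutator_mem_commutator hy hwP))
  have hywP : y * w * y⁻¹ ∈ P := by
    simpa [commutatorElement_def] using mul_mem (hAP hyw) hwP
  have hconj : x * (y * w * y⁻¹) * x⁻¹ = y * w * y⁻¹ := by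
    have hxw : x * w * x⁻¹ = w := mul_inv_eq_of_eq_mul (mem_centralizer_singleton_iff.mp hw).symm
    have hc := mem_centralizer_iff.mp (hxX y hy) _ hywP
    calc x * (y * w * y⁻¹) * x⁻¹ = ⁅x, y⁆ * y * (x * w * x⁻¹) * y⁻¹ * ⁅x, y⁆⁻¹ := by
          simp only [commutatorElement_def]; group
      _ = ⁅x, y⁆ * (y * w * y⁻¹) * ⁅x, y⁆⁻¹ := by rw [hxw]; group
      _ = y * w * y⁻¹ := by rw [← hc, mul_inv_cancel_right]
  have hywx : ⁅y, w⁆ ∈ centralizer {x} := by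
    have := mem_centralizer_singleton_iff.mpr (mul_inv_eq_iff_eq_mul.mp hconj).symm
    simpa [commutatorElement_def] using mul_mem this (inv_mem hw)
  have : ⁅y, w⁆ = 1 := by simpa [hfix] using mem_inf.mpr ⟨hyw, hywx⟩
  exact commutatorElement_eq_one_iff_mul_comm.mp this

theorem sup_centralizer_inf_eq [Finite A] (hx : x ∈ X) : A ⊔ (centralizer X ⊓ P) = P := by
  refine le_antisymm (sup_le hAP inf_le_right) fun u hu => ?_
  obtain ⟨s, hs, hsu⟩ := exists_mul_mem_centralizer_singleton
    (le_normalizer_of_commutator_le hAP hPX hx) hfix (hPX (commutator_mem_commutator hu hx))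
  have hsuP : s * u ∈ P := mul_mem (hAP hs) hu
  have hsuX := mem_centralizer_of_mem_centralizer_singleton hAP hPX hfix hxX hsuP hsu
  simpa using mul_mem_sup (inv_mem hs) (mem_inf.mpr ⟨hsuX, hsuP⟩)

end FixedPoints

end Subgroup

open Subgroup in
theorem sylow_eq_hyperfocal_semidirect_general {G : Type*} [Group G] [Finite G] (p : ℕ)
    (P : Sylow p G)
    (Op Pt : Subgroup G)
    (hPt : Pt = (P : Subgroup G) ⊓ Op)
    (hcyc : IsCyclic ↥Pt) (hne : Pt ≠ ⊥)
    (K : Subgroup G)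
    (hKle : K ≤ Subgroup.centralizer ((P : Subgroup G) : Set G))
    (X : Subgroup G) (hKX : K < X)
    (hfpf : ∀ x ∈ X, x ∉ K → ∀ s ∈ Pt, s ≠ 1 → x * s * x⁻¹ ≠ s)
    (hcomm : ⁅(P : Subgroup G), X⁆ ≤ Pt) :
    Pt ⊓ (Subgroup.centralizer (X : Set G) ⊓ (P : Subgroup G)) = ⊥ ∧
      Pt ⊔ (Subgroup.centralizer (X : Set G) ⊓ (P : Subgroup G)) = (P : Subgroup G) := by
  obtain ⟨x, hxX, hxK⟩ := SetLike.exists_of_lt hKX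
  have hPtP : Pt ≤ P := hPt ▸ inf_le_left
  have hfix : ∀ z ∈ X, z ∉ K → Pt ⊓ centralizer {z} = ⊥ := fun z hz hzK =>
    eq_bot_iff.mpr fun a ⟨ha, haz⟩ => mem_bot.mpr <| by_contra fun ha1 =>
      hfpf z hz hzK a ha ha1 (mul_inv_eq_of_eq_mul (mem_centralizer_singleton_iff.mp haz).symm)
  have hXN := le_normalizer_of_commutator_le hPtP hcomm
  have hxy : ∀ y ∈ X, ⁅x, y⁆ ∈ centralizer (P : Set G) := fun y hy => hKle <| by
    have hc := commutator_mem_centralizer_of_isCyclic (hXN hxX) (hXN hy)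
    by_contra hK
    refine hne (le_bot_iff.mp ?_)
    have hcX : ⁅x, y⁆ ∈ X := by
      simpa only [commutatorElement_def] using
        mul_mem (mul_mem (mul_mem hxX hy) (inv_mem hxX)) (inv_mem hy)
    rw [← hfix _ hcX hK]
    exact le_inf le_rfl fun a ha => mem_centralizer_singleton_iff.mpr (hc a ha)
  exact ⟨inf_centralizer_inf_eq_bot hxX (hfix x hxX hxK),
    sup_centralizer_inf_eq hPtP hcomm (hfix x hxX hxK) hxy hxX⟩

/-- Lemma 3: with `P̃ = P ⊓ O^p(G)` nontrivial cyclic of order `p^n`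
and normal in `P`, `T` a `p`-complement of `N_G(P)`, `K = O_{p'}(C_G(P))`, and
`X` a subgroup of `T` properly containing `K` such that elements of `X \ K` fix
no nontrivial element of `P̃` and `[P, X] ≤ P̃`, we have `P = P̃ ⋊ C_P(X)`. -/
theorem sylow_eq_hyperfocal_semidirect {G : Type*} [Group G] [Finite G] (p n : ℕ)
    [Fact p.Prime] (P : Sylow p G)
    (Op Pt : Subgroup G)
    (hOp : Op = Subgroup.closure {g : G | ¬ p ∣ orderOf g})
    (hPt : Pt = (P : Subgroup G) ⊓ Op)
    (hcyc : IsCyclic ↥Pt) (hne : Pt ≠ ⊥) (hcard : Nat.card ↥Pt = p ^ n)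
    (hPtnorm : (Pt.subgroupOf (P : Subgroup G)).Normal)
    (T : Subgroup G) (hTN : T ≤ Subgroup.normalizer ((P : Subgroup G) : Set G))
    (hTcop : Nat.Coprime (Nat.card T) p)
    (hTsup : (P : Subgroup G) ⊔ T = Subgroup.normalizer ((P : Subgroup G) : Set G))
    (K : Subgroup G)
    (hKle : K ≤ Subgroup.centralizer ((P : Subgroup G) : Set G))
    (hKcop : Nat.Coprime (Nat.card K) p)
    (hKnorm : (K.subgroupOf (Subgroup.centralizer ((P : Subgroup G) : Set G))).Normal)
    (hKmax : ∀ L ≤ Subgroup.centralizer ((P : Subgroup G) : Set G),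
      Nat.Coprime (Nat.card L) p →
      (L.subgroupOf (Subgroup.centralizer ((P : Subgroup G) : Set G))).Normal → L ≤ K)
    (X : Subgroup G) (hXT : X ≤ T) (hKX : K < X)
    (hfpf : ∀ x ∈ X, x ∉ K → ∀ s ∈ Pt, s ≠ 1 → x * s * x⁻¹ ≠ s)
    (hcomm : ⁅(P : Subgroup G), X⁆ ≤ Pt) :
    Pt ⊓ (Subgroup.centralizer (X : Set G) ⊓ (P : Subgroup G)) = ⊥ ∧
      Pt ⊔ (Subgroup.centralizer (X : Set G) ⊓ (P : Subgroup G)) = (P : Subgroup G) :=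
  sylow_eq_hyperfocal_semidirect_general p P Op Pt hPt hcyc hne K hKle X hKX hfpf hcomm
end

section
/- Let X be a group of automorphisms of a set S of p-power order acting on a finite p-group P that acts transitively on S, with gcd(|X|, |P|) not required but X a p'-group, such that the actions are compatible (i.e., the semidirect product acts on S). Then there exists an element of S fixed by X. (Glauberman's lemma special case: a p'-group X acting on a transitive P-set S, compatible actions, P a p-group, has a fixed point on S.) -/
/-!
Induction on `|P|`. The center `Z` of `P` is characteristic, hence `X`-invariant, and `P ⧸ Z`
acts transitively and compatibly on the set of `Z`-orbits, so by induction `X` stabilizes some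
orbit `Z • s₀`. Writing `x • s₀ = f x • s₀` with `f x ∈ Z`, the map `f` is a `1`-cocycle modulo
the stabilizer of `s₀` in the abelian group `Z`. Since `|X|` is invertible modulo the exponent of
`Z`, averaging over `X` shows that `f` is a coboundary `y ↦ (y • c)⁻¹ * c` modulo that stabilizer,
and then `c • s₀` is fixed by `X`.
-/

open MulAction

namespace MulAction

section OrbitQuotient

variable {G S : Type*} [Group G] [MulAction G S]

instance [Nonempty S] : Nonempty (orbitRel.Quotient G S) :=
  .map (Quotient.mk _) ‹_›

variable (N : Subgroup G) [N.Normal]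

theorem orbitRel_smul_of_normal (g : G) {s t : S} (h : orbitRel N S s t) :
    orbitRel N S (g • s) (g • t) := by
  obtain ⟨n, rfl⟩ := h
  refine ⟨⟨g * n * g⁻¹, Subgroup.Normal.conj_mem ‹_› (n : G) n.2 g⟩, ?_⟩
  simp [Subgroup.smul_def, mul_smul]

instance : MulAction G (orbitRel.Quotient N S) :=
  letI : SMul G (orbitRel.Quotient N S) :=
    ⟨fun g => Quotient.map (g • ·) fun _ _ => orbitRel_smul_of_normal N g⟩
  Quotient.mk_surjective.mulAction (Quotient.mk _) fun _ _ => rfl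

theorem orbitRel.Quotient.smul_eq_self_of_mem {n : G} (hn : n ∈ N) (t : orbitRel.Quotient N S) :
    n • t = t :=
  Quotient.inductionOn t fun _ => Quotient.sound ⟨⟨n, hn⟩, rfl⟩

instance : MulAction (G ⧸ N) (orbitRel.Quotient N S) :=
  compHom (orbitRel.Quotient N S) <|
    QuotientGroup.lift N (toPermHom G (orbitRel.Quotient N S)) fun _ hn =>
      Equiv.ext (orbitRel.Quotient.smul_eq_self_of_mem N hn)

instance [IsPretransitive G S] : IsPretransitive (G ⧸ N) (orbitRel.Quotient N S) where
  exists_smul_eq := by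
    rintro ⟨s⟩ ⟨t⟩
    obtain ⟨g, rfl⟩ := exists_smul_eq G s t
    exact ⟨g, rfl⟩

end OrbitQuotient

end MulAction

section Characteristic

variable {X G : Type*} [Group X] [Group G] [MulDistribMulAction X G] (N : Subgroup G)
  [N.Characteristic]

theorem Subgroup.smul_mem_of_characteristic (x : X) {g : G} (hg : g ∈ N) : x • g ∈ N :=
  Subgroup.characteristic_iff_le_comap.mp ‹_› (MulDistribMulAction.toMulEquiv G x) hg

instance : MulDistribMulAction X N :=
  letI : SMul X N := ⟨fun x g => ⟨x • (g : G), N.smul_mem_of_characteristic x g.2⟩⟩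
  Subtype.coe_injective.mulDistribMulAction N.subtype fun _ _ => rfl

instance : MulDistribMulAction X (G ⧸ N) :=
  letI : SMul X (G ⧸ N) := ⟨fun x => QuotientGroup.map N N (MulDistribMulAction.toMonoidHom G x)
    fun _ => N.smul_mem_of_characteristic x⟩
  QuotientGroup.mk_surjective.mulDistribMulAction (QuotientGroup.mk' N) fun _ _ => rfl

variable {S : Type*} [MulAction G S] [MulAction X S] [SMulDistribClass X G S]

instance : SMulDistribClass X N S where
  smul_distrib_smul x n s := smul_distrib_smul x (n : G) s

instance : MulAction X (orbitRel.Quotient N S) :=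
  letI : SMul X (orbitRel.Quotient N S) := ⟨fun x => Quotient.map (x • ·) fun _ _ h => by
    obtain ⟨n, rfl⟩ := h
    exact ⟨x • n, (smul_distrib_smul x (n : G) _).symm⟩⟩
  Quotient.mk_surjective.mulAction (Quotient.mk _) fun _ _ => rfl

instance : SMulDistribClass X (G ⧸ N) (orbitRel.Quotient N S) where
  smul_distrib_smul x := by
    rintro ⟨g⟩ ⟨s⟩
    change (⟦x • g • s⟧ : orbitRel.Quotient N S) = ⟦(x • g) • x • s⟧
    rw [smul_distrib_smul]

end Characteristic

theorem Subgroup.card_quotient_lt {G : Type*} [Group G] [Finite G] {H : Subgroup G} (hH : H ≠ ⊥) :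
    Nat.card (G ⧸ H) < Nat.card G := by
  rw [← H.card_mul_index, H.index_eq_card]
  exact lt_mul_left Nat.card_pos ((Subgroup.one_lt_card_iff_ne_bot H).2 hH)

/-- The witness `c` is the `|X|`-th root of `∏ x, f x`, which exists in a `p`-group. -/
theorem IsPGroup.exists_coboundary_mod {p : ℕ} [Fact p.Prime] {A X : Type*} [CommGroup A]
    [Group X] [Finite X] [MulDistribMulAction X A] (hA : IsPGroup p A) (hX : ¬ p ∣ Nat.card X)
    (H : Subgroup A) {f : X → A} (hf : ∀ x y, y • f x * f y * (f (y * x))⁻¹ ∈ H) :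
    ∃ c : A, ∀ y, y • c * f y * c⁻¹ ∈ H := by
  classical
  cases nonempty_fintype X
  set n := Nat.card X
  have root_mem : ∀ a : A, a ^ n ∈ H → a ∈ H := fun a ha => by
    rw [← (hA.powEquiv' hX).symm_apply_apply a]
    simpa using H.zpow_mem ha _
  set b := ∏ x, f x
  have hb : ∀ y, y • b * f y ^ n * b⁻¹ ∈ H := fun y => by
    have := H.prod_mem fun x (_ : x ∈ Finset.univ) => hf x y
    rwa [Finset.prod_mul_distrib, Finset.prod_mul_distrib, Finset.prod_inv_distrib,
      ← Finset.smul_prod', Finset.prod_const, Finset.card_univ, ← Nat.card_eq_fintype_card,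
      Fintype.prod_equiv (Equiv.mulLeft y) (fun x => f (y * x)) f fun _ => rfl] at this
  refine ⟨(hA.powEquiv' hX).symm b, fun y => root_mem _ ?_⟩
  have hc : ((hA.powEquiv' hX).symm b) ^ n = b := (hA.powEquiv' hX).apply_symm_apply b
  rw [mul_pow, mul_pow, ← smul_pow', inv_pow, hc]
  exact hb y

theorem MulAction.exists_fixed_point_of_forall_smul_mem_orbit {p : ℕ} [Fact p.Prime]
    {A X S : Type*} [Group A] [IsMulCommutative A] [Group X] [Finite X] [MulAction A S]
    [MulAction X S] [MulDistribMulAction X A] [SMulDistribClass X A S]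
    (hA : IsPGroup p A) (hX : ¬ p ∣ Nat.card X) {s₀ : S} (hs₀ : ∀ x : X, x • s₀ ∈ orbit A s₀) :
    ∃ s : S, ∀ x : X, x • s = s := by
  open scoped IsMulCommutative in
  choose f hf using hs₀
  beta_reduce at hf
  have mem_stabilizer : ∀ a b : A, a * b⁻¹ ∈ stabilizer A s₀ ↔ a • s₀ = b • s₀ := fun a b => by
    rw [mem_stabilizer_iff, mul_comm, mul_smul, inv_smul_eq_iff]
  obtain ⟨c, hc⟩ := hA.exists_coboundary_mod hX (stabilizer A s₀) (f := f) fun x y => by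
    rw [mem_stabilizer, mul_smul, hf, ← smul_distrib_smul, hf, hf, mul_smul]
  refine ⟨c • s₀, fun y => ?_⟩
  rw [smul_distrib_smul, ← hf, ← mul_smul, ← (mem_stabilizer _ _).1 (hc y)]

theorem IsPGroup.exists_fixed_point_of_isPretransitive {p : ℕ} [Fact p.Prime] {P X S : Type*}
    [Group P] [Group X] [Finite P] [Finite X] [Nonempty S] [MulAction P S] [MulAction X S]
    [MulDistribMulAction X P] [SMulDistribClass X P S] [IsPretransitive P S]
    (hP : IsPGroup p P) (hX : ¬ p ∣ Nat.card X) :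
    ∃ s : S, ∀ x : X, x • s = s := by
  rcases subsingleton_or_nontrivial P with hP1 | hP1
  · obtain ⟨s⟩ := ‹Nonempty S›
    refine ⟨s, fun x => ?_⟩
    obtain ⟨g, hg⟩ := exists_smul_eq P s (x • s)
    rw [← hg, Subsingleton.elim g 1, one_smul]
  · obtain ⟨⟨s₀⟩, hs₀⟩ := (hP.to_quotient (Subgroup.center P)).exists_fixed_point_of_isPretransitive
      (S := orbitRel.Quotient (Subgroup.center P) S) hX
    exact exists_fixed_point_of_forall_smul_mem_orbit (hP.to_subgroup _) hX
      (A := Subgroup.center P) fun x => Quotient.exact (hs₀ x)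
termination_by Nat.card P
decreasing_by
  exact Subgroup.card_quotient_lt ((Subgroup.nontrivial_iff_ne_bot _).1 hP.center_nontrivial)

theorem glauberman_fixed_point_general (p : ℕ) [Fact p.Prime]
    (P X S : Type*) [Group P] [Group X] [Finite P] [Finite X]
    [Nonempty S] [MulAction P S] [MulAction X S] [MulDistribMulAction X P]
    (hP : IsPGroup p P) (hX : ¬ p ∣ Nat.card X)
    (htrans : MulAction.IsPretransitive P S)
    (hcompat : ∀ (x : X) (g : P) (s : S), x • (g • s) = (x • g) • (x • s)) :
    ∃ s : S, ∀ x : X, x • s = s :=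
  have : SMulDistribClass X P S := ⟨hcompat⟩
  hP.exists_fixed_point_of_isPretransitive hX

/-- Glauberman's lemma: a `p'`-group `X` acting compatibly on a
finite `p`-group `P` (by automorphisms) and on a nonempty set `S` on which `P`
acts transitively has a fixed point on `S`. -/
theorem glauberman_fixed_point (p : ℕ) [Fact p.Prime]
    (P X S : Type*) [Group P] [Group X] [Finite P] [Finite X] [Finite S]
    [Nonempty S] [MulAction P S] [MulAction X S] [MulDistribMulAction X P]
    (hP : IsPGroup p P) (hX : ¬ p ∣ Nat.card X)
    (htrans : MulAction.IsPretransitive P S)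
    (hcompat : ∀ (x : X) (g : P) (s : S), x • (g • s) = (x • g) • (x • s)) :
    ∃ s : S, ∀ x : X, x • s = s :=
  glauberman_fixed_point_general p P X S hP hX htrans hcompat
end

section
/- Let G be a finite group with a cyclic Sylow p-subgroup P, and suppose |N_G(P) : C_G(P)| = e with m = (|P|−1)/e > 1. If the trivial character 1_G were an exceptional character, then for some nontrivial linear character μ of P and sign ε = ±1 one would have 1 = ε·Σ_{x ∈ N_G(P)/C_G(P)} μ(π^x) for all π ∈ P \ {1}; summing over π ∈ P \ {1} yields εm = −1, a contradiction since m > 1. Hence the trivial character is not exceptional. -/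
/-!
Let `S(π) = ∑_{a ∈ E} μ(a • π)`. Each `a ∈ E` permutes `P`, so by orthogonality of the
nontrivial character `μ` we get `∑_{π ∈ P} S(π) = 0`, while `S(1) = |E| = e`; hence
`∑_{π ≠ 1} S(π) = -e`. If `ε S(π) = 1` on `P \ {1}`, then `S(π) = ε` there and the same sum is
`(|P| - 1) ε = m e ε`, so `ε m = -1`, which is impossible for `m > 1`.
-/

open Finset

section OrbitSums

variable {Q E K : Type*} [Group Q] [Fintype Q] [Group E] [Fintype E]
  [MulDistribMulAction E Q] [CommRing K] [IsDomain K]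

theorem sum_sum_smul_eq_zero_of_ne_one (μ : Q →* K) (hμ : μ ≠ 1) :
    ∑ π : Q, ∑ a : E, μ (a • π) = 0 := by
  rw [sum_comm]
  exact sum_eq_zero fun a _ =>
    (Equiv.sum_comp (MulAction.toPerm a) μ).trans (sum_hom_units_eq_zero μ hμ)

theorem sum_erase_one_sum_smul_eq_neg_card [DecidableEq Q] (μ : Q →* K) (hμ : μ ≠ 1) :
    ∑ π ∈ univ.erase 1, ∑ a : E, μ (a • π) = -(Fintype.card E : K) := by
  have hsum := sum_sum_smul_eq_zero_of_ne_one (E := E) μ hμ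
  rw [← add_sum_erase _ _ (mem_univ 1)] at hsum
  simp only [smul_one, map_one, sum_const, card_univ, nsmul_one] at hsum
  linear_combination hsum

end OrbitSums

theorem trivial_character_not_exceptional_general {G : Type*} [Group G] [Finite G]
    (p : ℕ) (P : Sylow p G)
    (e m : ℕ)
    (hm : m * e = Nat.card ↥(P : Subgroup G) - 1) (hm1 : 1 < m)
    (E : Type*) [Group E] [Fintype E]
    [MulDistribMulAction E ↥(P : Subgroup G)]
    (hE : Fintype.card E = e)
    (μ : ↥(P : Subgroup G) →* ℂ) (hμ : μ ≠ 1)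
    (ε : ℤ) (hε : ε = 1 ∨ ε = -1)
    (hval : ∀ π : ↥(P : Subgroup G), π ≠ 1 → (ε : ℂ) * ∑ a : E, μ (a • π) = 1) :
    False := by
  classical
  have := Fintype.ofFinite ↥(P : Subgroup G)
  have hε_sq : (ε : ℂ) * ε = 1 := by rcases hε with rfl | rfl <;> norm_num
  have hsum_eq_sign : ∀ π : ↥(P : Subgroup G), π ≠ 1 → ∑ a : E, μ (a • π) = ε :=
    fun π hπ => by linear_combination (ε : ℂ) * hval π hπ - (∑ a : E, μ (a • π)) * hε_sq
  have hsum : -(e : ℂ) = (m * e : ℕ) * ε := by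
    rw [hm, Nat.card_eq_fintype_card, ← card_univ, ← card_erase_of_mem (mem_univ 1),
      ← nsmul_eq_mul, ← sum_const, ← hE, ← sum_erase_one_sum_smul_eq_neg_card μ hμ]
    exact sum_congr rfl fun π hπ => hsum_eq_sign π (ne_of_mem_erase hπ)
  have he_ne_zero : e ≠ 0 := hE ▸ Fintype.card_ne_zero
  have hprod : (ε * m + 1) * e = 0 := by
    have : (((ε * m + 1) * e : ℤ) : ℂ) = 0 := by push_cast at hsum ⊢; linear_combination -hsum
    exact_mod_cast this
  have hsign : ε * m + 1 = 0 := (mul_eq_zero.mp hprod).resolve_right (by exact_mod_cast he_ne_zero)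
  rcases hε with rfl | rfl <;> omega

/-- Lemma 4: for a finite group with cyclic Sylow `p`-subgroup `P`,
`e = |N_G(P) : C_G(P)|` and `m = (|P| - 1)/e > 1`, the trivial character cannot
be exceptional: assuming `1 = ε·∑_{x ∈ N_G(P)/C_G(P)} μ(π^x)` for all
`π ∈ P \ {1}` (for a nontrivial linear character `μ` of `P` and a sign `ε`)
leads to a contradiction. -/
theorem trivial_character_not_exceptional {G : Type*} [Group G] [Finite G]
    (p : ℕ) [Fact p.Prime] (P : Sylow p G)
    (hcyc : IsCyclic ↥(P : Subgroup G))
    (e m : ℕ)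
    (he : e = (Subgroup.centralizer ((P : Subgroup G) : Set G)).relIndex
      (Subgroup.normalizer ((P : Subgroup G) : Set G)))
    (hm : m * e = Nat.card ↥(P : Subgroup G) - 1) (hm1 : 1 < m)
    (E : Type*) [Group E] [Fintype E]
    [MulDistribMulAction E ↥(P : Subgroup G)]
    (hE : Fintype.card E = e)
    (hfpf : ∀ a : E, a ≠ 1 → ∀ s : ↥(P : Subgroup G), s ≠ 1 → a • s ≠ s)
    (μ : ↥(P : Subgroup G) →* ℂ) (hμ : μ ≠ 1)
    (ε : ℤ) (hε : ε = 1 ∨ ε = -1)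
    (hval : ∀ π : ↥(P : Subgroup G), π ≠ 1 → (ε : ℂ) * ∑ a : E, μ (a • π) = 1) :
    False :=
  trivial_character_not_exceptional_general p P e m hm hm1 E hE μ hμ ε hε hval
end

section
/- Let e ≥ 2 and m ≥ 2 be integers. Let X = (X_{kj}) be an e×e integer matrix with X_{11} = 1 and X_{1j} = 0 for 2 ≤ j ≤ e, satisfying for all i, j: Σ_{k=1}^e X_{ki} X_{kj} + m (Σ_{k=1}^e X_{ki})(Σ_{k=1}^e X_{kj}) = m + 1 if i = j, and = m if i ≠ j. Then there is a permutation σ of {2,…,e} such that X_{kj} = δ_{k, σ(j)} for all k, j (with σ(1)=1); i.e., after permuting columns 2,…,e, X is the identity matrix. -/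
/-!
Write `s(v)` for the entry sum of a column `v`. On the diagonal the identity reads
`‖v_j‖² + m s(v_j)² = m + 1`, so `s(v_j) ∈ {0, ±1}`, and `‖v_j‖² = 1` when `s(v_j) ≠ 0`.
Not all sums vanish: otherwise `Xᵀ X = 1 + m J` would be invertible while the rows of `X` add
up to `0`. A unit column `±e_k` pairs with any other column to `m`, so a column with sum `0`
would have an entry `±m` and norm at least `m² > m + 1`. Hence every column is `s_j e_{K j}`
with `s_j = ±1`, and the off-diagonal identity `s_i s_j ([K i = K j] + m) = m` forces `K` to
be injective and all signs to agree; `X₁₁ = 1` fixes them to `1`.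
-/

open Matrix

lemma Int.exists_forall_ne_eq_zero_of_sum_mul_self_eq_one {κ : Type*} [Fintype κ] {f : κ → ℤ}
    (h : ∑ k, f k * f k = 1) : ∃ k, ∀ l ≠ k, f l = 0 := by
  classical
  obtain ⟨k, hk⟩ : ∃ k, f k ≠ 0 := by
    by_contra! hf
    simp [hf] at h
  refine ⟨k, fun l hl => mul_self_eq_zero.mp ?_⟩
  have hsplit := Fintype.sum_eq_add_sum_compl k fun l => f l * f l
  have hrest_nonneg : 0 ≤ ∑ l ∈ {k}ᶜ, f l * f l := Finset.sum_nonneg fun l _ => mul_self_nonneg _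
  have hrest : ∑ l ∈ {k}ᶜ, f l * f l = 0 := by linarith [mul_self_pos.mpr hk]
  exact (Finset.sum_eq_zero_iff_of_nonneg fun l _ => mul_self_nonneg (f l)).mp hrest l
    (by simpa using hl)

section ShiftedGram

variable {κ ι : Type*} [Fintype κ]

def colSum (X : Matrix κ ι ℤ) (j : ι) : ℤ := ∑ k, X k j

/-- The Gram matrix of the columns of `X` for the form `⟨v, w⟩ + m s(v) s(w)` is `1 + m J`. -/
def IsShiftedGram [DecidableEq ι] (m : ℤ) (X : Matrix κ ι ℤ) : Prop :=
  ∀ i j, (∑ k, X k i * X k j) + m * colSum X i * colSum X j = if i = j then m + 1 else m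

lemma colSum_eq_apply_of_forall_ne_eq_zero {X : Matrix κ ι ℤ} {j : ι} {k : κ}
    (hk : ∀ l ≠ k, X l j = 0) : colSum X j = X k j :=
  Fintype.sum_eq_single k hk

lemma sum_mul_eq_of_forall_ne_eq_zero {X : Matrix κ ι ℤ} {i j : ι} {k : κ}
    (hk : ∀ l ≠ k, X l i = 0) : ∑ l, X l i * X l j = X k i * X k j :=
  Fintype.sum_eq_single k fun l hl => by rw [hk l hl, zero_mul]

namespace IsShiftedGram

variable [DecidableEq ι] {m : ℤ} {X : Matrix κ ι ℤ}

lemma sum_mul_self_add (h : IsShiftedGram m X) (j : ι) :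
    ∑ k, X k j * X k j + m * (colSum X j * colSum X j) = m + 1 := by
  simpa [mul_assoc] using h j j

lemma colSum_mul_self_le_one (h : IsShiftedGram m X) (hm : 0 < m) (j : ι) :
    colSum X j * colSum X j ≤ 1 := by
  have hnorm : 0 ≤ ∑ k, X k j * X k j := Finset.sum_nonneg fun k _ => mul_self_nonneg (X k j)
  have hdiag := h.sum_mul_self_add j
  by_contra! hgt
  have hfour : 4 ≤ colSum X j * colSum X j := by
    rcases le_or_gt 0 (colSum X j) with hs | hs
    · have : 2 ≤ colSum X j := by nlinarith
      nlinarith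
    · have : colSum X j ≤ -2 := by nlinarith
      nlinarith
  nlinarith

lemma sum_mul_self_eq_one (h : IsShiftedGram m X) (hm : 0 < m) {j : ι}
    (hj : colSum X j ≠ 0) : ∑ k, X k j * X k j = 1 := by
  have hs : colSum X j * colSum X j = 1 :=
    le_antisymm (h.colSum_mul_self_le_one hm j) (mul_self_pos.mpr hj)
  have hdiag := h.sum_mul_self_add j
  rw [hs, mul_one] at hdiag
  linarith

lemma colSum_ne_zero (h : IsShiftedGram m X) (hm : 2 ≤ m) {i : ι} (hi : colSum X i ≠ 0)
    (j : ι) : colSum X j ≠ 0 := by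
  intro hj
  have hij : i ≠ j := by rintro rfl; exact hi hj
  obtain ⟨k, hk⟩ := Int.exists_forall_ne_eq_zero_of_sum_mul_self_eq_one
    (h.sum_mul_self_eq_one (by omega) hi)
  have hunit : X k i * X k i = 1 := by
    rw [← sum_mul_eq_of_forall_ne_eq_zero hk, h.sum_mul_self_eq_one (by omega) hi]
  have hpair : X k i * X k j = m := by
    simpa [hij, hj, sum_mul_eq_of_forall_ne_eq_zero hk] using h i j
  have hentry : X k j * X k j = m * m := by
    rw [← hpair]; linear_combination -(X k j * X k j) * hunit
  have hle : X k j * X k j ≤ ∑ l, X l j * X l j :=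
    Finset.single_le_sum (fun l _ => mul_self_nonneg (X l j)) (Finset.mem_univ k)
  have hdiag := h.sum_mul_self_add j
  rw [hj, mul_zero, mul_zero, add_zero] at hdiag
  nlinarith

lemma exists_forall_ne_eq_zero (h : IsShiftedGram m X) (hm : 0 < m) {j : ι}
    (hj : colSum X j ≠ 0) : ∃ k, ∀ l ≠ k, X l j = 0 :=
  Int.exists_forall_ne_eq_zero_of_sum_mul_self_eq_one (h.sum_mul_self_eq_one hm hj)

lemma colSum_mul_self_eq_one_of_support (h : IsShiftedGram m X) (hm : 0 ≤ m) {K : ι → κ}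
    (hK : ∀ j, ∀ l ≠ K j, X l j = 0) (j : ι) : colSum X j * colSum X j = 1 := by
  have hdiag := h.sum_mul_self_add j
  rw [sum_mul_eq_of_forall_ne_eq_zero (hK j), ← colSum_eq_apply_of_forall_ne_eq_zero (hK j)]
    at hdiag
  nlinarith

lemma colSum_mul_apply_support (h : IsShiftedGram m X) {K : ι → κ}
    (hK : ∀ j, ∀ l ≠ K j, X l j = 0) {i j : ι} (hij : i ≠ j) :
    colSum X i * X (K i) j + m * colSum X i * colSum X j = m := by
  simpa [hij, sum_mul_eq_of_forall_ne_eq_zero (hK i),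
    ← colSum_eq_apply_of_forall_ne_eq_zero (hK i)] using h i j

lemma injective_of_support (h : IsShiftedGram m X) (hm : 0 ≤ m) {K : ι → κ}
    (hK : ∀ j, ∀ l ≠ K j, X l j = 0) : Function.Injective K := by
  intro i j hKij
  by_contra hij
  have hpair := h.colSum_mul_apply_support hK hij
  rw [hKij, ← colSum_eq_apply_of_forall_ne_eq_zero (hK j)] at hpair
  have hsign : colSum X i * colSum X j = 1 ∨ colSum X i * colSum X j = -1 :=
    mul_self_eq_one_iff.mp <| by
      linear_combination colSum X j * colSum X j * h.colSum_mul_self_eq_one_of_support hm hK i +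
        h.colSum_mul_self_eq_one_of_support hm hK j
  rcases hsign with hsign | hsign <;> nlinarith

lemma colSum_eq_of_support (h : IsShiftedGram m X) (hm : 0 < m) {K : ι → κ}
    (hK : ∀ j, ∀ l ≠ K j, X l j = 0) (i j : ι) : colSum X i = colSum X j := by
  rcases eq_or_ne i j with rfl | hij
  · rfl
  have hpair := h.colSum_mul_apply_support hK hij
  rw [hK j (K i) ((h.injective_of_support hm.le hK).ne hij), mul_zero, zero_add] at hpair
  have hprod : colSum X i * colSum X j = 1 := by
    rw [mul_assoc] at hpair
    exact mul_left_cancel₀ hm.ne' (hpair.trans (mul_one m).symm)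
  linear_combination
    colSum X j * hprod - colSum X i * h.colSum_mul_self_eq_one_of_support hm.le hK j

end IsShiftedGram

end ShiftedGram

namespace IsShiftedGram

variable {n : Type*} [Fintype n] [DecidableEq n] {m : ℤ} {X : Matrix n n ℤ}

lemma exists_colSum_ne_zero [Nonempty n] (h : IsShiftedGram m X) (hm : 0 ≤ m) :
    ∃ j, colSum X j ≠ 0 := by
  by_contra! hs
  have hdet : X.det = 0 :=
    exists_vecMul_eq_zero_iff.mp ⟨1, one_ne_zero, funext fun j => by
      simpa [vecMul, dotProduct, colSum] using hs j⟩
  have hgram :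
      Xᵀ * X = 1 + replicateCol Unit (fun _ => m) * replicateRow Unit (fun _ => (1 : ℤ)) := by
    ext i j
    have hij := h i j
    simp only [hs, mul_zero, add_zero] at hij
    simp only [Matrix.add_apply, mul_apply, transpose_apply, one_apply, replicateCol_apply,
      replicateRow_apply, hij, Finset.univ_unique, Finset.sum_singleton]
    split_ifs <;> ring
  have hdet_gram := det_one_add_replicateCol_mul_replicateRow (ι := Unit)
    (fun _ : n => m) (fun _ => (1 : ℤ))
  rw [← hgram, det_mul, det_transpose, hdet, mul_zero] at hdet_gram
  have hdot : (fun _ => (1 : ℤ)) ⬝ᵥ (fun _ : n => m) = Fintype.card n * m := by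
    simp [dotProduct]
  have hcard : (0 : ℤ) ≤ Fintype.card n * m := by positivity
  linarith

lemma exists_perm (h : IsShiftedGram m X) (hm : 2 ≤ m) {a : n} (ha : X a a = 1) :
    ∃ σ : Equiv.Perm n, σ a = a ∧ ∀ k j, X k j = if k = σ j then 1 else 0 := by
  have : Nonempty n := ⟨a⟩
  obtain ⟨j₀, hj₀⟩ := h.exists_colSum_ne_zero (by omega)
  choose K hK using fun j => h.exists_forall_ne_eq_zero (by omega) (h.colSum_ne_zero hm hj₀ j)
  have hKa : K a = a := by
    by_contra hKa
    simp [hK a a (Ne.symm hKa)] at ha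
  have hcolSum : ∀ j, colSum X j = 1 := fun j => by
    rw [h.colSum_eq_of_support (by omega) hK j a, colSum_eq_apply_of_forall_ne_eq_zero (hK a),
      hKa, ha]
  refine ⟨Equiv.ofBijective K (Finite.injective_iff_bijective.mp
    (h.injective_of_support (by omega) hK)), hKa, fun k j => ?_⟩
  split_ifs with hk
  · rw [Equiv.ofBijective_apply] at hk
    rw [hk, ← colSum_eq_apply_of_forall_ne_eq_zero (hK j), hcolSum]
  · exact hK j k hk

end IsShiftedGram

/-- an `e × e` integer matrix whose first row is `(1, 0, …, 0)` and
whose columns satisfy `⟨v_i, v_j⟩ + m·s(v_i)·s(v_j) = m + δ_{ij}` (with `m ≥ 2`)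
is, up to a permutation of the columns `2, …, e`, the identity matrix. -/
theorem decomposition_matrix_identity (e m : ℕ) (he : 2 ≤ e) (hm : 2 ≤ m)
    (X : Matrix (Fin e) (Fin e) ℤ)
    (h11 : X ⟨0, by omega⟩ ⟨0, by omega⟩ = 1)
    (horth : ∀ i j : Fin e,
      (∑ k, X k i * X k j) + (m : ℤ) * (∑ k, X k i) * (∑ k, X k j) =
        if i = j then (m : ℤ) + 1 else (m : ℤ)) :
    ∃ σ : Equiv.Perm (Fin e), σ ⟨0, by omega⟩ = ⟨0, by omega⟩ ∧
      ∀ k j : Fin e, X k j = if k = σ j then 1 else 0 :=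
  IsShiftedGram.exists_perm horth (by exact_mod_cast hm) h11
end

section
/- Let G be a finite group, p a prime, P ∈ Syl_p(G), and suppose P̃ = P ∩ O^p(G) is cyclic with the property N_G(P̃) = C_G(P̃) N_G(P). Let K̃ = O_{p'}(C_G(P̃)), T a p-complement of N_G(P), K = O_{p'}(C_G(P)) = T ∩ C_G(P). Then T̃ := K̃T is a p-complement of N_{O^p(G)}(P̃) and T̃/K̃ ≅ T/K. -/
/-!
`O^p(G)`, generated by the `p'`-elements, is normal with `p`-group quotient, contains every
`p'`-subgroup, and `P̃ = P ∩ O^p(G)` is a Sylow `p`-subgroup of it. Being abelian, `P̃` is central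
in `C = C_G(P̃)`, so by Schur–Zassenhaus `C ∩ O^p(G) = P̃ × Q`, where `Q` consists of the
`p'`-elements; hence `Q` is normal in `C` and `Q ≤ K̃`. A `p'`-element of `T` centralizing `P̃`
centralizes `P`, since its commutators with `P` lie in `P̃` and commute with it; so `K̃ ∩ T = K`,
and the second isomorphism theorem gives `T̃/K̃ ≅ T/K`. Finally every element of
`N_G(P̃) ∩ O^p(G) = C·P·T ∩ O^p(G)` is `c a t` with `c a ∈ CP ∩ O^p(G) ≤ C ∩ O^p(G)` (an index
argument), so `N_G(P̃) ∩ O^p(G) = T̃P̃` and `T̃` has `p`-power index in it.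
-/

open scoped Pointwise

theorem orderOf_conj {G : Type*} [Group G] (g x : G) : orderOf (g * x * g⁻¹) = orderOf x := by
  simpa using orderOf_injective (MulAut.conj g).toMonoidHom (MulAut.conj g).injective x

theorem orderOf_dvd_of_conj_eq_mul {G : Type*} [Group G] {x g c : G} (hc : x * g * x⁻¹ = g * c)
    (hxc : Commute x c) : orderOf c ∣ orderOf x := by
  have hpow : ∀ n : ℕ, x ^ n * g * (x ^ n)⁻¹ = g * c ^ n := by
    intro n
    induction n with
    | zero => simp
    | succ n ih =>
      calc x ^ (n + 1) * g * (x ^ (n + 1))⁻¹ = x * (x ^ n * g * (x ^ n)⁻¹) * x⁻¹ := by group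
        _ = x * g * x⁻¹ * (x * c ^ n * x⁻¹) := by rw [ih]; group
        _ = g * c ^ (n + 1) := by rw [hc, (hxc.pow_right n).eq]; group
  refine orderOf_dvd_of_pow_eq_one (mul_left_cancel (a := g) ?_)
  rw [← hpow, pow_orderOf_eq_one]
  group

namespace Subgroup

variable {G : Type*} [Group G]

theorem relIndex_sup_right_of_le_normalizer {H N : Subgroup G} (hLE : H ≤ normalizer N) :
    N.relIndex (H ⊔ N) = N.relIndex H := by
  let := normal_subgroupOf_of_le_normalizer hLE
  let := normal_subgroupOf_sup_of_le_normalizer hLE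
  exact Nat.card_congr (QuotientGroup.quotientInfEquivProdNormalizerQuotient H N hLE).toEquiv.symm

theorem relIndex_sup_left_of_le_normalizer [Finite G] {H N : Subgroup G}
    (hLE : H ≤ normalizer N) : H.relIndex (H ⊔ N) = H.relIndex N := by
  have h₁ := relIndex_mul_relIndex (H ⊓ N) H (H ⊔ N) inf_le_left le_sup_left
  have h₂ := relIndex_mul_relIndex (H ⊓ N) N (H ⊔ N) inf_le_right le_sup_right
  rw [inf_relIndex_left, ← relIndex_sup_right_of_le_normalizer hLE, ← h₂, inf_relIndex_right,
    mul_comm (H.relIndex N)] at h₁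
  exact Nat.eq_of_mul_eq_mul_left (Nat.pos_of_ne_zero index_ne_zero_of_finite) h₁

theorem normalizer_le_normalizer_inf_of_normal (H : Subgroup G) {N : Subgroup G} [N.Normal] :
    normalizer (H : Set G) ≤ normalizer ((H ⊓ N : Subgroup G) : Set G) :=
  (le_inf le_rfl le_normalizer_of_normal).trans inf_normalizer_le_normalizer_inf

theorem card_mul_relIndex {H K : Subgroup G} (h : H ≤ K) :
    Nat.card H * H.relIndex K = Nat.card K := by
  simpa using relIndex_mul_relIndex ⊥ H K bot_le h

theorem normal_closure_setOf_not_dvd_orderOf (p : ℕ) :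
    (closure {g : G | ¬ p ∣ orderOf g}).Normal := by
  have hs : normalizer {g : G | ¬ p ∣ orderOf g} = ⊤ :=
    eq_top_iff.mpr fun g _ x => by simp only [Set.mem_ofPred_eq, orderOf_conj]
  rw [← normalizer_eq_top_iff, eq_top_iff, ← hs]
  exact normalizer_le_normalizer_closure _

theorem le_closure_setOf_not_dvd_orderOf {p : ℕ} [hp : Fact p.Prime] {H : Subgroup G}
    (hH : (Nat.card H).Coprime p) : H ≤ closure {g : G | ¬ p ∣ orderOf g} := fun _ hx =>
  subset_closure fun hpx =>
    (Nat.Prime.coprime_iff_not_dvd hp.out).mp hH.symm (hpx.trans (orderOf_dvd_natCard H hx))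

end Subgroup

namespace IsPGroup

variable {G : Type*} [Group G] {p : ℕ} {S : Subgroup G}

theorem eq_one_of_coprime_orderOf (hS : IsPGroup p S) {a : G} (ha : a ∈ S)
    (hcop : (orderOf a).Coprime p) : a = 1 := by
  obtain ⟨k, hk⟩ := hS ⟨a, ha⟩
  have hdvd : orderOf a ∣ p ^ k :=
    orderOf_dvd_of_pow_eq_one (by simpa using congrArg Subtype.val hk)
  exact orderOf_eq_one_iff.mp ((hcop.pow_right k).eq_one_of_dvd hdvd)

theorem mem_of_mem_sup_of_coprime_orderOf [Fact p.Prime] (hS : IsPGroup p S) {H : Subgroup G}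
    (hH : (Nat.card H).Coprime p) (hSH : S ≤ Subgroup.centralizer H) {x : G} (hx : x ∈ S ⊔ H)
    (hxp : (orderOf x).Coprime p) : x ∈ H := by
  rw [← SetLike.mem_coe, Subgroup.coe_mul_of_left_le_normalizer_right S H
    (hSH.trans (Subgroup.centralizer_le_normalizer _))] at hx
  obtain ⟨a, ha, b, hb, rfl⟩ := hx
  have hba : Commute b a := Subgroup.mem_centralizer_iff.mp (hSH ha) b hb
  have hbp : (orderOf b).Coprime p := hH.coprime_dvd_left (Subgroup.orderOf_dvd_natCard H hb)
  have hdvd : orderOf a ∣ orderOf (a * b) * orderOf b := by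
    simpa using ((hba.symm.mul_left (Commute.refl b)).inv_right).orderOf_mul_dvd_mul_orderOf
  have ha1 : a = 1 := hS.eq_one_of_coprime_orderOf ha ((hxp.mul_left hbp).coprime_dvd_left hdvd)
  simpa [ha1] using hb

theorem exists_relIndex_sup_eq_pow [Finite G] [Fact p.Prime] (hS : IsPGroup p S) {H : Subgroup G}
    (hHS : H ≤ Subgroup.normalizer S) : ∃ k : ℕ, H.relIndex (H ⊔ S) = p ^ k := by
  obtain ⟨n, hn⟩ := IsPGroup.iff_card.mp hS
  rw [Subgroup.relIndex_sup_left_of_le_normalizer hHS]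
  exact (Nat.dvd_prime_pow Fact.out).mp (hn ▸ Subgroup.relIndex_dvd_card _ _) |>.imp
    fun _ => And.right

end IsPGroup

namespace Subgroup

variable {G : Type*} [Group G] {p : ℕ}

/-- The commutators of `x` with `P` lie in `P ⊓ N` and have order dividing that of `x`. -/
theorem mem_centralizer_of_mem_centralizer_inf [Fact p.Prime] {P N : Subgroup G} [N.Normal]
    (hP : IsPGroup p P) {x : G} (hxN : x ∈ N) (hxP : x ∈ normalizer P)
    (hxp : (orderOf x).Coprime p) (hx : x ∈ centralizer (P ⊓ N : Subgroup G)) :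
    x ∈ centralizer P := by
  refine mem_centralizer_iff.mpr fun g hg => ?_
  set c := g⁻¹ * (x * g * x⁻¹)
  have hcP : c ∈ P := mul_mem (inv_mem hg) ((mem_normalizer_iff.mp hxP g).mp hg)
  have hcN : c ∈ N := by
    simpa [c, mul_assoc] using mul_mem ((inferInstance : N.Normal).conj_mem' x hxN g) (inv_mem hxN)
  have hxc : Commute x c := (mem_centralizer_iff.mp hx c ⟨hcP, hcN⟩).symm
  have hc1 : c = 1 := hP.eq_one_of_coprime_orderOf hcP
    (hxp.coprime_dvd_left (orderOf_dvd_of_conj_eq_mul (g := g) (by simp [c]) hxc))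
  exact (mul_inv_eq_iff_eq_mul.mp (inv_mul_eq_one.mp hc1).symm).symm

theorem inf_eq_inf_centralizer [Fact p.Prime] {P N K T : Subgroup G} [N.Normal]
    (hP : IsPGroup p P) (hK : (Nat.card K).Coprime p)
    (hKC : K ≤ centralizer (P ⊓ N : Subgroup G)) (hT : (Nat.card T).Coprime p) (hTN : T ≤ N)
    (hTP : T ≤ normalizer P) (hCN : centralizer (P ⊓ N : Subgroup G) ⊓ N ≤ P ⊓ N ⊔ K) :
    K ⊓ T = T ⊓ centralizer P := by
  have hTp {x : G} (hx : x ∈ T) : (orderOf x).Coprime p :=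
    hT.coprime_dvd_left (orderOf_dvd_natCard T hx)
  refine le_antisymm ?_ ?_
  · rintro x ⟨hxK, hxT⟩
    exact ⟨hxT, mem_centralizer_of_mem_centralizer_inf hP (hTN hxT) (hTP hxT) (hTp hxT) (hKC hxK)⟩
  · rintro x ⟨hxT, hxC⟩
    have hxCN : x ∈ centralizer (P ⊓ N : Subgroup G) ⊓ N :=
      ⟨centralizer_le inf_le_left hxC, hTN hxT⟩
    exact ⟨hP.to_inf_left.mem_of_mem_sup_of_coprime_orderOf hK (le_centralizer_iff.mp hKC)
      (hCN hxCN) (hTp hxT), hxT⟩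

theorem exists_coprime_le_sup_of_isPGroup [Finite G] [Fact p.Prime] {S H : Subgroup G}
    (hS : IsPGroup p S) (hSH : S ≤ H) (hHS : H ≤ normalizer S) (hcop : (S.relIndex H).Coprime p) :
    ∃ Q ≤ H, (Nat.card Q).Coprime p ∧ H ≤ S ⊔ Q := by
  have : (S.subgroupOf H).Normal := (normal_subgroupOf_iff_le_normalizer hSH).mpr hHS
  obtain ⟨n, hn⟩ := IsPGroup.iff_card.mp hS
  have hcard : Nat.card (S.subgroupOf H) = p ^ n :=
    (Nat.card_congr (subgroupOfEquivOfLe hSH).toEquiv).trans hn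
  obtain ⟨Q, hQ⟩ := exists_right_complement'_of_coprime (N := S.subgroupOf H)
    (hcard ▸ Nat.Coprime.pow_left n hcop.symm)
  refine ⟨Q.map H.subtype, map_subtype_le Q, ?_, ?_⟩
  · rw [card_map_of_injective H.subtype_injective, ← hQ.symm.index_eq_card]
    exact hcop
  · calc H = (S.subgroupOf H ⊔ Q).map H.subtype := by
          rw [hQ.sup_eq_top, ← MonoidHom.range_eq_map, range_subtype]
      _ ≤ S ⊔ Q.map H.subtype := by
        rw [map_sup, subgroupOf_map_subtype]
        exact sup_le_sup_right inf_le_left _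

theorem le_sup_of_le_centralizer_of_coprime_relIndex [Finite G] [Fact p.Prime]
    {S H C K : Subgroup G} (hS : IsPGroup p S) (hSH : S ≤ H) (hHC : H ≤ C)
    (hSC : S ≤ centralizer C) (hCH : C ≤ normalizer H) (hcop : (S.relIndex H).Coprime p)
    (hK : ∀ L ≤ C, (Nat.card L).Coprime p → (L.subgroupOf C).Normal → L ≤ K) :
    H ≤ S ⊔ K := by
  have hHS : H ≤ normalizer S :=
    hHC.trans ((le_centralizer_iff.mp hSC).trans (centralizer_le_normalizer _))
  obtain ⟨Q, hQH, hQ, hHQ⟩ := exists_coprime_le_sup_of_isPGroup hS hSH hHS hcop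
  have hSQ : S ≤ centralizer Q := hSC.trans (centralizer_le (hQH.trans hHC))
  refine hHQ.trans (sup_le_sup_left (hK Q (hQH.trans hHC) hQ ?_) S)
  -- `Q` is the set of `p'`-elements of `H`, hence normal in `C`.
  refine (normal_subgroupOf_iff (hQH.trans hHC)).mpr fun q g hq hg => ?_
  have hconj : g * q * g⁻¹ ∈ H := (mem_normalizer_iff.mp (hCH hg) q).mp (hQH hq)
  refine hS.mem_of_mem_sup_of_coprime_orderOf hQ hSQ (hHQ hconj) ?_
  rw [orderOf_conj]
  exact hQ.coprime_dvd_left (orderOf_dvd_natCard Q hq)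

theorem le_of_le_sup_of_coprime_relIndex [Finite G] {C P S K : Subgroup G} (hP : IsPGroup p P)
    (hPC : P ≤ normalizer C) (hSC : S ≤ C) (hK : K ≤ P ⊔ C) (hSK : (S.relIndex K).Coprime p) :
    K ≤ C := by
  obtain ⟨n, hn⟩ := (isPGroup_iff_card_dvd_pow).mp hP
  have : (C.subgroupOf (P ⊔ C)).Normal := normal_subgroupOf_sup_of_le_normalizer hPC
  have hdvd : C.relIndex K ∣ p ^ n := calc
    C.relIndex K = (C.subgroupOf (P ⊔ C)).relIndex (K.subgroupOf (P ⊔ C)) :=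
      (relIndex_subgroupOf hK).symm
    _ ∣ C.relIndex (P ⊔ C) := relIndex_dvd_index_of_normal _ _
    _ = C.relIndex P := relIndex_sup_right_of_le_normalizer hPC
    _ ∣ p ^ n := (relIndex_dvd_card _ _).trans hn
  have hcop : (C.relIndex K).Coprime p := hSK.coprime_dvd_left (relIndex_dvd_of_le_left K hSC)
  exact relIndex_eq_one.mp ((hcop.pow_right n).eq_one_of_dvd hdvd)

theorem inf_le_sup_of_coe_eq_mul {N C P T X Y : Subgroup G}
    (hN : (N : Set G) = C * (P ⊔ T : Subgroup G)) (hTP : T ≤ normalizer P) (hTX : T ≤ X)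
    (hY : (P ⊔ C) ⊓ X ≤ Y) : N ⊓ X ≤ Y ⊔ T := by
  rintro m ⟨hmN : m ∈ N, hmX : m ∈ X⟩
  rw [← SetLike.mem_coe, hN] at hmN
  obtain ⟨c, hc, n, hn, rfl⟩ := hmN
  rw [coe_mul_of_right_le_normalizer_left P T hTP] at hn
  obtain ⟨a, ha, t, ht, rfl⟩ := hn
  have hcaY : c * a ∈ Y := hY ⟨mul_mem (mem_sup_right hc) (mem_sup_left ha),
    by simpa [mul_assoc] using mul_mem hmX (inv_mem (hTX ht))⟩
  simpa [mul_assoc] using mul_mem_sup hcaY ht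

theorem coprime_card_sup [Finite G] {H K : Subgroup G} (hH : (Nat.card H).Coprime p)
    (hK : (Nat.card K).Coprime p) (hKH : K ≤ normalizer H) :
    (Nat.card (H ⊔ K : Subgroup G)).Coprime p := by
  rw [← card_mul_relIndex (le_sup_left : H ≤ H ⊔ K), sup_comm,
    relIndex_sup_right_of_le_normalizer hKH]
  exact hH.mul_left (hK.coprime_dvd_left (relIndex_dvd_card _ _))

theorem nonempty_quotient_sup_mulEquiv {H K L : Subgroup G} [(H.subgroupOf (H ⊔ K)).Normal]
    [(L.subgroupOf K).Normal] (hL : H ⊓ K = L) :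
    Nonempty ((H ⊔ K : Subgroup G) ⧸ H.subgroupOf (H ⊔ K) ≃* K ⧸ L.subgroupOf K) := by
  have hKH : K ≤ normalizer H := le_sup_right.trans (le_normalizer_of_normal_subgroupOf le_sup_left)
  have := normal_subgroupOf_of_le_normalizer hKH
  have := normal_subgroupOf_sup_of_le_normalizer hKH
  refine ⟨(QuotientGroup.congr (H.subgroupOf (H ⊔ K)) (H.subgroupOf (K ⊔ H))
    (MulEquiv.subgroupCongr (sup_comm H K)) ?_).trans
    ((QuotientGroup.quotientInfEquivProdNormalizerQuotient K H hKH).symm.trans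
      (QuotientGroup.quotientMulEquivOfEq ?_))⟩
  · ext x
    exact ⟨fun ⟨_, hy, hyx⟩ => hyx ▸ hy, fun hx => ⟨⟨x, sup_comm K H ▸ x.2⟩, hx, rfl⟩⟩
  · rw [← hL, inf_subgroupOf_right]

end Subgroup

namespace Sylow

open Subgroup

variable {G : Type*} [Group G] {p : ℕ}

theorem coprime_relIndex_inf [Finite G] [hp : Fact p.Prime] (P : Sylow p G)
    {N H : Subgroup G} [N.Normal] (hPH : (P : Subgroup G) ⊓ N ≤ H) (hHN : H ≤ N) :
    (((P : Subgroup G) ⊓ N).relIndex H).Coprime p := by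
  have hdvd : ((P : Subgroup G) ⊓ N).relIndex H ∣ (P : Subgroup G).index := calc
    _ ∣ ((P : Subgroup G) ⊓ N).relIndex N :=
      Dvd.intro _ (relIndex_mul_relIndex _ _ _ hPH hHN)
    _ = (P : Subgroup G).relIndex (P ⊔ N) := by
      rw [inf_relIndex_right, relIndex_sup_left_of_le_normalizer le_normalizer_of_normal]
    _ ∣ (P : Subgroup G).index := relIndex_dvd_index_of_le le_sup_left
  exact Nat.Coprime.coprime_dvd_left hdvd
    ((Nat.Prime.coprime_iff_not_dvd hp.out).mpr P.not_dvd_index).symm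

theorem centralizer_inf_le_sup [Finite G] [Fact p.Prime] (P : Sylow p G) {N K : Subgroup G}
    [N.Normal] (hab : (P : Subgroup G) ⊓ N ≤ centralizer ((P : Subgroup G) ⊓ N : Subgroup G))
    (hK : ∀ L ≤ centralizer ((P : Subgroup G) ⊓ N : Subgroup G), (Nat.card L).Coprime p →
      (L.subgroupOf (centralizer ((P : Subgroup G) ⊓ N : Subgroup G))).Normal → L ≤ K) :
    centralizer ((P : Subgroup G) ⊓ N : Subgroup G) ⊓ N ≤ (P : Subgroup G) ⊓ N ⊔ K :=
  le_sup_of_le_centralizer_of_coprime_relIndex P.isPGroup'.to_inf_left (le_inf hab inf_le_right)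
    inf_le_left (le_centralizer_iff.mp le_rfl)
    (le_normalizer.trans (normalizer_le_normalizer_inf_of_normal _))
    (P.coprime_relIndex_inf (le_inf hab inf_le_right) inf_le_right) hK

theorem sup_centralizer_inf_le_centralizer [Finite G] [Fact p.Prime] (P : Sylow p G)
    {N : Subgroup G} [N.Normal]
    (hab : (P : Subgroup G) ⊓ N ≤ centralizer ((P : Subgroup G) ⊓ N : Subgroup G)) :
    ((P : Subgroup G) ⊔ centralizer ((P : Subgroup G) ⊓ N : Subgroup G)) ⊓ N ≤
      centralizer ((P : Subgroup G) ⊓ N : Subgroup G) := by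
  have hPC : (P : Subgroup G) ≤
      normalizer (centralizer (((P : Subgroup G) ⊓ N : Subgroup G) : Set G) : Set G) :=
    (le_normalizer.trans (normalizer_le_normalizer_inf_of_normal (N := N) _)).trans
      (le_normalizer_of_normal_subgroupOf
        (centralizer_le_normalizer (((P : Subgroup G) ⊓ N : Subgroup G) : Set G)))
  exact le_of_le_sup_of_coprime_relIndex P.isPGroup' hPC hab inf_le_left
    (P.coprime_relIndex_inf (le_inf (hab.trans le_sup_right) inf_le_right) inf_le_right)

end Sylow

open Subgroup

theorem p_complement_quotient_iso_general {G : Type*} [Group G] [Finite G] (p : ℕ)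
    [Fact p.Prime] (P : Sylow p G)
    (Op Pt : Subgroup G)
    (hOp : Op = Subgroup.closure {g : G | ¬ p ∣ orderOf g})
    (hPt : Pt = (P : Subgroup G) ⊓ Op)
    (hcyc : IsCyclic ↥Pt)
    (hprod : (Subgroup.normalizer (Pt : Set G) : Set G) =
      (Subgroup.centralizer (Pt : Set G) : Set G) * (Subgroup.normalizer ((P : Subgroup G) : Set G) : Set G))
    (Kt : Subgroup G)
    (hKtle : Kt ≤ Subgroup.centralizer (Pt : Set G))
    (hKtcop : Nat.Coprime (Nat.card Kt) p)
    (hKtmax : ∀ L ≤ Subgroup.centralizer (Pt : Set G), Nat.Coprime (Nat.card L) p →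
      (L.subgroupOf (Subgroup.centralizer (Pt : Set G))).Normal → L ≤ Kt)
    (T : Subgroup G) (hTN : T ≤ Subgroup.normalizer ((P : Subgroup G) : Set G))
    (hTcop : Nat.Coprime (Nat.card T) p)
    (hTsup : (P : Subgroup G) ⊔ T = Subgroup.normalizer ((P : Subgroup G) : Set G))
    (K : Subgroup G)
    (hK : K = T ⊓ Subgroup.centralizer ((P : Subgroup G) : Set G))
    [hn1 : (Kt.subgroupOf (Kt ⊔ T)).Normal] [hn2 : (K.subgroupOf T).Normal] :
    (Kt ⊔ T ≤ Subgroup.normalizer (Pt : Set G) ⊓ Op ∧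
      Nat.Coprime (Nat.card ↥(Kt ⊔ T)) p ∧
      ∃ k : ℕ, (Kt ⊔ T).relIndex (Subgroup.normalizer (Pt : Set G) ⊓ Op) = p ^ k) ∧
    Nonempty ((↥(Kt ⊔ T) ⧸ Kt.subgroupOf (Kt ⊔ T)) ≃* (↥T ⧸ K.subgroupOf T)) := by
  subst hPt hK
  have hOpN : Op.Normal := hOp ▸ normal_closure_setOf_not_dvd_orderOf p
  have hTOp : T ≤ Op := hOp ▸ le_closure_setOf_not_dvd_orderOf hTcop
  have hKtOp : Kt ≤ Op := hOp ▸ le_closure_setOf_not_dvd_orderOf hKtcop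
  set Pt := (P : Subgroup G) ⊓ Op
  have hPtC : Pt ≤ centralizer Pt := le_centralizer Pt
  have hCOp : centralizer Pt ⊓ Op ≤ Pt ⊔ Kt := P.centralizer_inf_le_sup hPtC hKtmax
  have hW : Kt ⊔ T ≤ normalizer Pt ⊓ Op :=
    sup_le (le_inf (hKtle.trans (centralizer_le_normalizer _)) hKtOp)
      (le_inf (hTN.trans (normalizer_le_normalizer_inf_of_normal _)) hTOp)
  have hM : normalizer Pt ⊓ Op = Kt ⊔ T ⊔ Pt := by
    refine le_antisymm ?_ (sup_le hW (le_inf le_normalizer inf_le_right))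
    calc normalizer Pt ⊓ Op ≤ Pt ⊔ Kt ⊔ T :=
          inf_le_sup_of_coe_eq_mul (hTsup ▸ hprod) hTN hTOp
            ((le_inf (P.sup_centralizer_inf_le_centralizer hPtC) inf_le_right).trans hCOp)
      _ = Kt ⊔ T ⊔ Pt := by ac_rfl
  refine ⟨⟨hW, coprime_card_sup hKtcop hTcop ?_, ?_⟩, nonempty_quotient_sup_mulEquiv
    (inf_eq_inf_centralizer P.isPGroup' hKtcop hKtle hTcop hTOp hTN hCOp)⟩
  · exact le_sup_right.trans (le_normalizer_of_normal_subgroupOf le_sup_left)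
  · rw [hM]
    exact P.isPGroup'.to_inf_left.exists_relIndex_sup_eq_pow (hW.trans inf_le_left)

/-- with `P̃ = P ⊓ O^p(G)` cyclic, `N_G(P̃) = C_G(P̃)·N_G(P)`,
`K̃ = O_{p'}(C_G(P̃))`, `T` a `p`-complement of `N_G(P)` and
`K = O_{p'}(C_G(P)) = T ⊓ C_G(P)`: the subgroup `T̃ = K̃T` is a `p`-complement
of `N_{O^p(G)}(P̃)` and `T̃/K̃ ≅ T/K`. -/
theorem p_complement_quotient_iso {G : Type*} [Group G] [Finite G] (p : ℕ)
    [Fact p.Prime] (P : Sylow p G)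
    (Op Pt : Subgroup G)
    (hOp : Op = Subgroup.closure {g : G | ¬ p ∣ orderOf g})
    (hPt : Pt = (P : Subgroup G) ⊓ Op)
    (hcyc : IsCyclic ↥Pt)
    (hprod : (Subgroup.normalizer (Pt : Set G) : Set G) =
      (Subgroup.centralizer (Pt : Set G) : Set G) * (Subgroup.normalizer ((P : Subgroup G) : Set G) : Set G))
    (Kt : Subgroup G)
    (hKtle : Kt ≤ Subgroup.centralizer (Pt : Set G))
    (hKtcop : Nat.Coprime (Nat.card Kt) p)
    (hKtnorm : (Kt.subgroupOf (Subgroup.centralizer (Pt : Set G))).Normal)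
    (hKtmax : ∀ L ≤ Subgroup.centralizer (Pt : Set G), Nat.Coprime (Nat.card L) p →
      (L.subgroupOf (Subgroup.centralizer (Pt : Set G))).Normal → L ≤ Kt)
    (T : Subgroup G) (hTN : T ≤ Subgroup.normalizer ((P : Subgroup G) : Set G))
    (hTcop : Nat.Coprime (Nat.card T) p)
    (hTsup : (P : Subgroup G) ⊔ T = Subgroup.normalizer ((P : Subgroup G) : Set G))
    (K : Subgroup G)
    (hK : K = T ⊓ Subgroup.centralizer ((P : Subgroup G) : Set G))
    (hKcore : K ≤ Subgroup.centralizer ((P : Subgroup G) : Set G) ∧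
      Nat.Coprime (Nat.card K) p ∧
      (K.subgroupOf (Subgroup.centralizer ((P : Subgroup G) : Set G))).Normal ∧
      ∀ L ≤ Subgroup.centralizer ((P : Subgroup G) : Set G),
        Nat.Coprime (Nat.card L) p →
        (L.subgroupOf (Subgroup.centralizer ((P : Subgroup G) : Set G))).Normal → L ≤ K)
    [hn1 : (Kt.subgroupOf (Kt ⊔ T)).Normal] [hn2 : (K.subgroupOf T).Normal] :
    (Kt ⊔ T ≤ Subgroup.normalizer (Pt : Set G) ⊓ Op ∧
      Nat.Coprime (Nat.card ↥(Kt ⊔ T)) p ∧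
      ∃ k : ℕ, (Kt ⊔ T).relIndex (Subgroup.normalizer (Pt : Set G) ⊓ Op) = p ^ k) ∧
    Nonempty ((↥(Kt ⊔ T) ⧸ Kt.subgroupOf (Kt ⊔ T)) ≃* (↥T ⧸ K.subgroupOf T)) :=
  p_complement_quotient_iso_general p P Op Pt hOp hPt hcyc hprod Kt hKtle hKtcop hKtmax T hTN hTcop
    hTsup K hK (hn1 := hn1) (hn2 := hn2)
end

section
/- Let P be a finite p-group with normal cyclic subgroup P̃ of order p^n, P = ⟨P̃, u⟩ for some u ∈ P, and write u = ũ r with ũ ∈ P̃ and r ∈ C (a fixed complement, assuming P = P̃ ⋊ C). Then [P̃, P] = [P̃, r] is cyclic, and the conjugacy class of r in P is r^P = [P̃, r]·r. -/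
/-!
As `P̃` is abelian and normal, `s ↦ ⁅s, r⁆` is a homomorphism on `P̃`; its image `[P̃, r]` is a
subgroup of the cyclic group `P̃`, normalized by `P̃` and by `r`. Since `u ∈ P̃ r`, these generate
`P`, and they commute pairwise modulo `[P̃, r]`, so `P / [P̃, r]` is abelian. Hence `[P̃, P]` lies in
`[P̃, r]`, and every conjugate `g r g⁻¹ = ⁅g, r⁆ r` lies in `[P̃, r] r`.
-/

open scoped commutatorElement

open Subgroup

theorem Subgroup.sup_closure_singleton_mul_le {G : Type*} [Group G] (N : Subgroup G) (r : G)
    {t : G} (ht : t ∈ N) : N ⊔ closure {t * r} ≤ N ⊔ closure {r} :=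
  sup_le le_sup_left <| (closure_le _).mpr <| Set.singleton_subset_iff.mpr <|
    mul_mem (mem_sup_left ht) (mem_sup_right (subset_closure rfl))

theorem commutator_le_of_commutatorElement_mem {G : Type*} [Group G] {K : Subgroup G} [K.Normal]
    {A : Set G} (hA : closure A = ⊤) (h : ∀ a ∈ A, ∀ b ∈ A, ⁅a, b⁆ ∈ K) :
    commutator G ≤ K := by
  rw [← Normal.quotient_commutative_iff_commutator_le]
  have hcomm : ∀ x ∈ QuotientGroup.mk' K '' A, ∀ y ∈ QuotientGroup.mk' K '' A, x * y = y * x := by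
    rintro _ ⟨a, ha, rfl⟩ _ ⟨b, hb, rfl⟩
    rw [← commutatorElement_eq_one_iff_mul_comm, ← map_commutatorElement,
      QuotientGroup.mk'_apply, QuotientGroup.eq_one_iff]
    exact h a ha b hb
  have htop : closure (QuotientGroup.mk' K '' A) = ⊤ := by
    rw [← MonoidHom.map_closure, hA, map_top_of_surjective _ (QuotientGroup.mk'_surjective K)]
  have := isMulCommutative_closure hcomm
  exact ⟨⟨fun x y ↦ setLike_mul_comm (htop ▸ mem_top x) (htop ▸ mem_top y)⟩⟩

section

variable {G : Type*} [Group G] (N : Subgroup G) [N.Normal]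

theorem commutatorElement_mem_of_mem_left {s : G} (hs : s ∈ N) (g : G) : ⁅s, g⁆ ∈ N :=
  commutator_le_left N ⊤ (commutator_mem_commutator hs (mem_top g))

variable [IsMulCommutative N] (r : G)

def commutatorRightHom : N →* G where
  toFun s := ⁅(s : G), r⁆
  map_one' := commutatorElement_one_left r
  map_mul' s t := by
    have hts : ⁅(t : G), r⁆ ∈ N := commutatorElement_mem_of_mem_left N t.2 r
    rw [coe_mul, commutatorElement_mul_left_eq_conj_mul,
      setLike_mul_comm s.2 hts, mul_inv_cancel_right,
      setLike_mul_comm hts (commutatorElement_mem_of_mem_left N s.2 r)]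

theorem coe_range_commutatorRightHom :
    ((commutatorRightHom N r).range : Set G) = {x | ∃ s ∈ N, x = ⁅s, r⁆} := by
  ext x
  simp [commutatorRightHom, eq_comm]

theorem range_commutatorRightHom_le : (commutatorRightHom N r).range ≤ N := by
  rintro _ ⟨s, rfl⟩
  exact commutatorElement_mem_of_mem_left N s.2 r

theorem mem_normalizer_range_commutatorRightHom :
    r ∈ normalizer ((commutatorRightHom N r).range : Set G) := by
  rw [coe_range_commutatorRightHom, mem_set_normalizer_iff]
  intro h
  constructor
  · rintro ⟨s, hs, rfl⟩
    exact ⟨r * s * r⁻¹, Normal.conj_mem ‹_› s hs r, by group⟩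
  · rintro ⟨s, hs, hrh⟩
    refine ⟨r⁻¹ * s * r, by simpa using Normal.conj_mem ‹_› s hs r⁻¹, ?_⟩
    rw [show h = r⁻¹ * (r * h * r⁻¹) * r by group, hrh]
    group

theorem normal_range_commutatorRightHom (h : N ⊔ closure {r} = ⊤) :
    (commutatorRightHom N r).range.Normal := by
  rw [← normalizer_eq_top_iff, eq_top_iff, ← h, sup_le_iff, closure_le, Set.singleton_subset_iff]
  refine ⟨?_, mem_normalizer_range_commutatorRightHom N r⟩
  rw [le_normalizer_iff_commutator_le_right]
  calc ⁅N, (commutatorRightHom N r).range⁆ ≤ ⁅N, N⁆ :=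
        commutator_mono le_rfl (range_commutatorRightHom_le N r)
    _ = ⊥ := commutator_self_eq_bot_iff.mpr ‹_›
    _ ≤ _ := bot_le

theorem commutator_le_range_commutatorRightHom (h : N ⊔ closure {r} = ⊤) :
    commutator G ≤ (commutatorRightHom N r).range := by
  have := normal_range_commutatorRightHom N r h
  have hr : ∀ a ∈ N, ⁅a, r⁆ ∈ (commutatorRightHom N r).range := fun a ha ↦ ⟨⟨a, ha⟩, rfl⟩
  refine commutator_le_of_commutatorElement_mem (A := N ∪ {r})
    (by rw [Subgroup.closure_union, Subgroup.closure_eq, h]) ?_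
  rintro a (ha | rfl) b (hb | rfl)
  · rw [commutatorElement_eq_one_iff_mul_comm.mpr (setLike_mul_comm ha hb)]
    exact one_mem _
  · exact hr a ha
  · rw [← commutatorElement_inv]
    exact inv_mem (hr b hb)
  · rw [commutatorElement_self]
    exact one_mem _

theorem commutator_top_right_eq_range_commutatorRightHom (h : N ⊔ closure {r} = ⊤) :
    ⁅N, ⊤⁆ = (commutatorRightHom N r).range := by
  refine le_antisymm ((commutator_mono le_top le_rfl).trans
    (commutator_le_range_commutatorRightHom N r h)) ?_
  rintro _ ⟨s, rfl⟩
  exact commutator_mem_commutator s.2 (mem_top r)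

theorem isConj_iff_exists_commutatorElement_mul (h : N ⊔ closure {r} = ⊤) {x : G} :
    IsConj r x ↔ ∃ s ∈ N, x = ⁅s, r⁆ * r := by
  rw [isConj_iff]
  constructor
  · rintro ⟨g, rfl⟩
    have hg : ⁅g, r⁆ ∈ ((commutatorRightHom N r).range : Set G) :=
      commutator_le_range_commutatorRightHom N r h
        (commutator_mem_commutator (mem_top g) (mem_top r))
    rw [coe_range_commutatorRightHom] at hg
    obtain ⟨s, hs, hgs⟩ := hg
    exact ⟨s, hs, by rw [← hgs]; group⟩
  · rintro ⟨s, -, rfl⟩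
    exact ⟨s, by group⟩

end

theorem commutator_and_class_of_r_general
    {P : Type*} [Group P]
    (Pt : Subgroup P) (hN : Pt.Normal) (hcyc : IsCyclic ↥Pt)
    (r ut u : P) (hut : ut ∈ Pt) (hu : u = ut * r)
    (hgen : Pt ⊔ Subgroup.closure {u} = ⊤) :
    ((⁅Pt, (⊤ : Subgroup P)⁆ : Subgroup P) : Set P) =
        {x : P | ∃ s ∈ Pt, x = ⁅s, r⁆} ∧
      IsCyclic ↥(⁅Pt, (⊤ : Subgroup P)⁆ : Subgroup P) ∧
      {x : P | ∃ g : P, g * r * g⁻¹ = x} = {x : P | ∃ s ∈ Pt, x = ⁅s, r⁆ * r} := by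
  have htop : Pt ⊔ closure {r} = ⊤ :=
    top_unique (hgen ▸ hu ▸ Pt.sup_closure_singleton_mul_le r hut)
  rw [commutator_top_right_eq_range_commutatorRightHom Pt r htop, coe_range_commutatorRightHom]
  refine ⟨rfl, isCyclic_of_le (range_commutatorRightHom_le Pt r), ?_⟩
  ext x
  exact isConj_iff.symm.trans (isConj_iff_exists_commutatorElement_mul Pt r htop)

/-- with `P̃ ⊴ P` cyclic of order `p^n`, `P = P̃ ⋊ C`,
`P = ⟨P̃, u⟩`, `u = ũ·r` with `ũ ∈ P̃`, `r ∈ C`: the commutator subgroup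
`[P̃, P]` equals the set `{⁅s, r⁆ : s ∈ P̃}` (in particular it is cyclic), and
the conjugacy class of `r` in `P` is `[P̃, r]·r`. -/
theorem commutator_and_class_of_r (p n : ℕ) (hp : p.Prime)
    {P : Type*} [Group P] [Finite P] (hpg : IsPGroup p P)
    (Pt : Subgroup P) (hN : Pt.Normal) (hcyc : IsCyclic ↥Pt)
    (hcard : Nat.card ↥Pt = p ^ n)
    (C : Subgroup P) (hcomp : Subgroup.IsComplement' Pt C)
    (r ut u : P) (hr : r ∈ C) (hut : ut ∈ Pt) (hu : u = ut * r)
    (hgen : Pt ⊔ Subgroup.closure {u} = ⊤) :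
    ((⁅Pt, (⊤ : Subgroup P)⁆ : Subgroup P) : Set P) =
        {x : P | ∃ s ∈ Pt, x = ⁅s, r⁆} ∧
      IsCyclic ↥(⁅Pt, (⊤ : Subgroup P)⁆ : Subgroup P) ∧
      {x : P | ∃ g : P, g * r * g⁻¹ = x} = {x : P | ∃ s ∈ Pt, x = ⁅s, r⁆ * r} :=
  commutator_and_class_of_r_general Pt hN hcyc r ut u hut hu hgen
end
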